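/- arXiv:2302.13183 — 2 statements merged into one kernel-verified Lean document; each statement's English description precedes it below -/
import Mathlib

section
/- Let S ⊆ ℝ^n be a compact star-shaped set centered at 0 (i.e., for all y ∈ S and λ ∈ [0,1], λy ∈ S), with B(0,η) ⊆ S ⊆ B[0,L] for some 0 < η ≤ L. Suppose the radial function r : S^{n−1} → ℝ, r(u) = sup{λ : λu ∈ S}, is Lipschitz. Then there exists a bi-Lipschitz bijection F : S → B[0,L] with bi-Lipschitz constant depending only on L, η, and the Lipschitz constant of r. -/
open Metric Set

section aux
variable {E : Type*} [NormedAddCommGroup E] [NormedSpace ℝ E]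

/-- normalized-difference estimate -/
lemma norm_mul_normalize_sub (x y : E) (hx : x ≠ 0) (hy : y ≠ 0) (h : ‖y‖ ≤ ‖x‖) :
    ‖y‖ * ‖‖x‖⁻¹ • x - ‖y‖⁻¹ • y‖ ≤ 2 * ‖x - y‖ := by
  have hx' : ‖x‖ ≠ 0 := norm_ne_zero_iff.2 hx
  have hy' : ‖y‖ ≠ 0 := norm_ne_zero_iff.2 hy
  have hxu : ‖x‖ • (‖x‖⁻¹ • x) = x := by rw [smul_smul, mul_inv_cancel₀ hx', one_smul]
  have hyu : ‖y‖ • (‖y‖⁻¹ • y) = y := by rw [smul_smul, mul_inv_cancel₀ hy', one_smul]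
  have hun : ‖(‖x‖⁻¹ • x)‖ = 1 := by
    rw [norm_smul, norm_inv, norm_norm, inv_mul_cancel₀ hx']
  calc ‖y‖ * ‖‖x‖⁻¹ • x - ‖y‖⁻¹ • y‖ = ‖‖y‖ • (‖x‖⁻¹ • x) - y‖ := by
        have e : ‖y‖ • (‖x‖⁻¹ • x - ‖y‖⁻¹ • y) = ‖y‖ • (‖x‖⁻¹ • x) - y := by
          rw [smul_sub, hyu]
        rw [← norm_smul_of_nonneg (norm_nonneg y), e]
    _ ≤ ‖‖y‖ • (‖x‖⁻¹ • x) - ‖x‖ • (‖x‖⁻¹ • x)‖ + ‖‖x‖ • (‖x‖⁻¹ • x) - y‖ :=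
        norm_sub_le_norm_sub_add_norm_sub _ _ _
    _ = |‖y‖ - ‖x‖| + ‖x - y‖ := by
        rw [← sub_smul, norm_smul, hun, mul_one, Real.norm_eq_abs, hxu]
    _ ≤ ‖x - y‖ + ‖x - y‖ := by
        have : |‖y‖ - ‖x‖| ≤ ‖y - x‖ := abs_norm_sub_norm_le y x
        rw [norm_sub_rev y x] at this; linarith
    _ = 2 * ‖x - y‖ := by ring

lemma radial_lip_aux (s : E → ℝ) (M K : ℝ) (hM : 0 ≤ M) (hK : 0 ≤ K)
    (hbound : ∀ u : E, ‖u‖ = 1 → |s u| ≤ M)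
    (hlip : ∀ u v : E, ‖u‖ = 1 → ‖v‖ = 1 → |s u - s v| ≤ K * ‖u - v‖)
    (x y : E) (h : ‖y‖ ≤ ‖x‖) :
    ‖s (‖x‖⁻¹ • x) • x - s (‖y‖⁻¹ • y) • y‖ ≤ (M + 2*K) * ‖x - y‖ := by
  rcases eq_or_ne x 0 with rfl | hx
  · have : y = 0 := by simpa using h
    subst this; simp [smul_zero]
  rcases eq_or_ne y 0 with rfl | hy
  · have hun : ‖(‖x‖⁻¹ • x)‖ = 1 := by
      rw [norm_smul, norm_inv, norm_norm, inv_mul_cancel₀ (norm_ne_zero_iff.2 hx)]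
    have h1 : ‖s (‖x‖⁻¹ • x) • x‖ ≤ M * ‖x‖ := by
      rw [norm_smul, Real.norm_eq_abs]
      exact mul_le_mul_of_nonneg_right (hbound _ hun) (norm_nonneg x)
    simp only [smul_zero, sub_zero]
    have : M * ‖x‖ ≤ (M + 2*K) * ‖x‖ := by nlinarith [norm_nonneg x]
    linarith
  · have hxu : ‖(‖x‖⁻¹ • x)‖ = 1 := by
      rw [norm_smul, norm_inv, norm_norm, inv_mul_cancel₀ (norm_ne_zero_iff.2 hx)]
    have hyu : ‖(‖y‖⁻¹ • y)‖ = 1 := by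
      rw [norm_smul, norm_inv, norm_norm, inv_mul_cancel₀ (norm_ne_zero_iff.2 hy)]
    have key : s (‖x‖⁻¹ • x) • x - s (‖y‖⁻¹ • y) • y
        = s (‖x‖⁻¹ • x) • (x - y) + (s (‖x‖⁻¹ • x) - s (‖y‖⁻¹ • y)) • y := by
      rw [smul_sub, sub_smul]; abel
    rw [key]
    have h1 : ‖s (‖x‖⁻¹ • x) • (x - y)‖ ≤ M * ‖x - y‖ := by
      rw [norm_smul, Real.norm_eq_abs]
      exact mul_le_mul_of_nonneg_right (hbound _ hxu) (norm_nonneg _)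
    have h2 : ‖(s (‖x‖⁻¹ • x) - s (‖y‖⁻¹ • y)) • y‖ ≤ 2 * K * ‖x - y‖ := by
      rw [norm_smul, Real.norm_eq_abs]
      calc |s (‖x‖⁻¹ • x) - s (‖y‖⁻¹ • y)| * ‖y‖
          ≤ (K * ‖‖x‖⁻¹ • x - ‖y‖⁻¹ • y‖) * ‖y‖ :=
            mul_le_mul_of_nonneg_right (hlip _ _ hxu hyu) (norm_nonneg y)
        _ = K * (‖y‖ * ‖‖x‖⁻¹ • x - ‖y‖⁻¹ • y‖) := by ring
        _ ≤ K * (2 * ‖x - y‖) :=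
            mul_le_mul_of_nonneg_left (norm_mul_normalize_sub x y hx hy h) hK
        _ = 2 * K * ‖x - y‖ := by ring
    calc ‖_ + _‖ ≤ ‖s (‖x‖⁻¹ • x) • (x - y)‖ + ‖(s (‖x‖⁻¹ • x) - s (‖y‖⁻¹ • y)) • y‖ :=
          norm_add_le _ _
      _ ≤ (M + 2*K) * ‖x - y‖ := by linarith

lemma radial_lip (s : E → ℝ) (M K : ℝ) (hM : 0 ≤ M) (hK : 0 ≤ K)
    (hbound : ∀ u : E, ‖u‖ = 1 → |s u| ≤ M)
    (hlip : ∀ u v : E, ‖u‖ = 1 → ‖v‖ = 1 → |s u - s v| ≤ K * ‖u - v‖)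
    (x y : E) :
    ‖s (‖x‖⁻¹ • x) • x - s (‖y‖⁻¹ • y) • y‖ ≤ (M + 2*K) * ‖x - y‖ := by
  rcases le_total ‖y‖ ‖x‖ with h | h
  · exact radial_lip_aux s M K hM hK hbound hlip x y h
  · rw [norm_sub_rev, norm_sub_rev x y]
    exact radial_lip_aux s M K hM hK hbound hlip y x h

lemma div_mul_div_cancel_one {a b : ℝ} (ha : a ≠ 0) (hb : b ≠ 0) :
    a / b * (b / a) = 1 := by field_simp

end aux


/-- a compact star-shaped set (centered at `0`) containing a ball `B(0,η)` and
contained in `B[0,L]`, whose radial function is Lipschitz on the unit sphere, admits a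
bi-Lipschitz bijection onto the closed ball `B[0,L]`. -/
theorem starShaped_biLipschitz_to_ball {n : ℕ}
    (S : Set (EuclideanSpace ℝ (Fin n))) (hScompact : IsCompact S)
    (hstar : ∀ y ∈ S, ∀ t : ℝ, t ∈ Icc (0:ℝ) 1 → t • y ∈ S)
    (η L : ℝ) (hη : 0 < η) (hηL : η ≤ L)
    (hball : ball (0 : EuclideanSpace ℝ (Fin n)) η ⊆ S)
    (hS : S ⊆ closedBall (0 : EuclideanSpace ℝ (Fin n)) L)
    (r : EuclideanSpace ℝ (Fin n) → ℝ)
    (hr : ∀ u, ‖u‖ = 1 → r u = sSup {t : ℝ | t • u ∈ S})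
    (C₁ : ℝ) (hrLip : ∀ u v, ‖u‖ = 1 → ‖v‖ = 1 → |r u - r v| ≤ C₁ * ‖u - v‖) :
    ∃ C : ℝ, 0 < C ∧ ∃ F : EuclideanSpace ℝ (Fin n) → EuclideanSpace ℝ (Fin n),
      F '' S = closedBall 0 L ∧ Set.InjOn F S ∧
      (∀ x ∈ S, ∀ y ∈ S,
        (1 / C) * ‖x - y‖ ≤ ‖F x - F y‖ ∧ ‖F x - F y‖ ≤ C * ‖x - y‖) := by
  have hL : 0 < L := lt_of_lt_of_le hη hηL
  have hL' : L ≠ 0 := hL.ne'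
  have h0S : (0 : EuclideanSpace ℝ (Fin n)) ∈ S := hball (mem_ball_self hη)
  set K : ℝ := max C₁ 0 with hKdef
  have hK : 0 ≤ K := le_max_right _ _
  have hKlip : ∀ u v : EuclideanSpace ℝ (Fin n), ‖u‖ = 1 → ‖v‖ = 1 →
      |r u - r v| ≤ K * ‖u - v‖ := fun u v hu hv =>
    (hrLip u v hu hv).trans
      (mul_le_mul_of_nonneg_right (le_max_left _ _) (norm_nonneg _))
  -- facts about the radial function at unit vectors
  have hTfacts : ∀ u : EuclideanSpace ℝ (Fin n), ‖u‖ = 1 →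
      η ≤ r u ∧ r u ≤ L ∧ (r u) • u ∈ S := by
    intro u hu
    set T : Set ℝ := {t : ℝ | t • u ∈ S} with hTdef
    have hzero : (0:ℝ) ∈ T := by
      show (0:ℝ) • u ∈ S; simpa using h0S
    have hLbd : ∀ t ∈ T, t ≤ L := by
      intro t ht
      have h1 : ‖t • u‖ ≤ L := mem_closedBall_zero_iff.1 (hS ht)
      rw [norm_smul, hu, mul_one, Real.norm_eq_abs] at h1
      exact (le_abs_self t).trans h1
    have hbdd : BddAbove T := ⟨L, hLbd⟩
    have hclosed : IsClosed T :=
      hScompact.isClosed.preimage (continuous_id.smul continuous_const)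
    have hrT : r u = sSup T := hr u hu
    have hle : r u ≤ L := by
      rw [hrT]; exact csSup_le ⟨0, hzero⟩ hLbd
    have hge : η ≤ r u := by
      rw [hrT]
      by_contra hcon
      push_neg at hcon
      have h0le : 0 ≤ sSup T := le_csSup hbdd hzero
      have htmem : ((sSup T + η)/2) ∈ T := by
        have h1 : (0:ℝ) ≤ (sSup T + η)/2 := by linarith
        have h2 : (sSup T + η)/2 < η := by linarith
        show ((sSup T + η)/2) • u ∈ S
        refine hball ?_
        rw [mem_ball_zero_iff, norm_smul, hu, mul_one, Real.norm_eq_abs,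
          abs_of_nonneg h1]
        exact h2
      have := le_csSup hbdd htmem
      linarith
    refine ⟨hge, hle, ?_⟩
    have : sSup T ∈ T := hclosed.csSup_mem ⟨0, hzero⟩ hbdd
    rw [hrT]; exact this
  have hunit : ∀ x : EuclideanSpace ℝ (Fin n), x ≠ 0 → ‖‖x‖⁻¹ • x‖ = 1 := by
    intro x hx
    rw [norm_smul, norm_inv, norm_norm, inv_mul_cancel₀ (norm_ne_zero_iff.2 hx)]
  have hmemle : ∀ x ∈ S, x ≠ 0 → ‖x‖ ≤ r (‖x‖⁻¹ • x) := by
    intro x hxS hx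
    rw [hr _ (hunit x hx)]
    refine le_csSup ?_ ?_
    · refine ⟨L, fun t ht => ?_⟩
      have h1 : ‖t • (‖x‖⁻¹ • x)‖ ≤ L := mem_closedBall_zero_iff.1 (hS ht)
      rw [norm_smul, hunit x hx, mul_one, Real.norm_eq_abs] at h1
      exact (le_abs_self t).trans h1
    · show ‖x‖ • (‖x‖⁻¹ • x) ∈ S
      rw [smul_smul, mul_inv_cancel₀ (norm_ne_zero_iff.2 hx), one_smul]
      exact hxS
  have hdir : ∀ (c : ℝ), 0 < c → ∀ x : EuclideanSpace ℝ (Fin n), x ≠ 0 →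
      ‖c • x‖⁻¹ • (c • x) = ‖x‖⁻¹ • x := by
    intro c hc x hx
    have hx' : ‖x‖ ≠ 0 := norm_ne_zero_iff.2 hx
    rw [norm_smul, Real.norm_eq_abs, abs_of_pos hc, smul_smul]
    congr 1
    field_simp
  set F : EuclideanSpace ℝ (Fin n) → EuclideanSpace ℝ (Fin n) :=
    fun x => (L / r (‖x‖⁻¹ • x)) • x with hFdef
  set G : EuclideanSpace ℝ (Fin n) → EuclideanSpace ℝ (Fin n) :=
    fun z => (r (‖z‖⁻¹ • z) / L) • z with hGdef
  have hF0 : F 0 = 0 := by simp [hFdef]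
  have hG0 : G 0 = 0 := by simp [hGdef]
  have hGF : ∀ x : EuclideanSpace ℝ (Fin n), G (F x) = x := by
    intro x
    rcases eq_or_ne x 0 with rfl | hx
    · rw [hF0, hG0]
    · have hu := hunit x hx
      obtain ⟨hge, hle, -⟩ := hTfacts _ hu
      have hru : 0 < r (‖x‖⁻¹ • x) := lt_of_lt_of_le hη hge
      have hru' : r (‖x‖⁻¹ • x) ≠ 0 := hru.ne'
      have hc : 0 < L / r (‖x‖⁻¹ • x) := div_pos hL hru
      show (r (‖F x‖⁻¹ • F x) / L) • F x = x
      have hFx : F x = (L / r (‖x‖⁻¹ • x)) • x := rfl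
      rw [hFx, hdir _ hc x hx, smul_smul]
      rw [div_mul_div_cancel_one hru' hL']
      rw [one_smul]
  have hFG : ∀ z : EuclideanSpace ℝ (Fin n), F (G z) = z := by
    intro z
    rcases eq_or_ne z 0 with rfl | hz
    · rw [hG0, hF0]
    · have hu := hunit z hz
      obtain ⟨hge, hle, -⟩ := hTfacts _ hu
      have hru : 0 < r (‖z‖⁻¹ • z) := lt_of_lt_of_le hη hge
      have hru' : r (‖z‖⁻¹ • z) ≠ 0 := hru.ne'
      have hc : 0 < r (‖z‖⁻¹ • z) / L := div_pos hru hL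
      show (L / r (‖G z‖⁻¹ • G z)) • G z = z
      have hGz : G z = (r (‖z‖⁻¹ • z) / L) • z := rfl
      rw [hGz, hdir _ hc z hz, smul_smul]
      rw [div_mul_div_cancel_one hL' hru']
      rw [one_smul]
  -- Lipschitz bounds
  set CF : ℝ := L/η + 2*(L*K/(η*η)) with hCFdef
  set CG : ℝ := 1 + 2*(K/L) with hCGdef
  have hCF0 : 0 < CF := by positivity
  have hCG0 : 0 < CG := by positivity
  have hFLip : ∀ x y : EuclideanSpace ℝ (Fin n), ‖F x - F y‖ ≤ CF * ‖x - y‖ := by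
    intro x y
    exact radial_lip (fun w => L / r w) (L/η) (L*K/(η*η))
      (by positivity) (by positivity)
      (fun u hu => by
        obtain ⟨hge, hle, -⟩ := hTfacts u hu
        have hru : 0 < r u := lt_of_lt_of_le hη hge
        rw [abs_of_nonneg (div_nonneg hL.le hru.le)]
        gcongr)
      (fun u v hu hv => by
        obtain ⟨hgeu, hleu, -⟩ := hTfacts u hu
        obtain ⟨hgev, hlev, -⟩ := hTfacts v hv
        have hru : 0 < r u := lt_of_lt_of_le hη hgeu
        have hrv : 0 < r v := lt_of_lt_of_le hη hgev
        have h1 : L / r u - L / r v = L * (r v - r u) / (r u * r v) := by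
          field_simp
        rw [h1, abs_div, abs_mul, abs_of_nonneg hL.le,
          abs_of_pos (mul_pos hru hrv), abs_sub_comm]
        calc L * |r u - r v| / (r u * r v) ≤ L * (K * ‖u - v‖) / (η * η) := by
              gcongr
              all_goals first
                | positivity
                | exact hKlip u v hu hv
                | nlinarith
          _ = (L*K/(η*η)) * ‖u - v‖ := by ring)
      x y
  have hGLip : ∀ x y : EuclideanSpace ℝ (Fin n), ‖G x - G y‖ ≤ CG * ‖x - y‖ := by
    intro x y
    exact radial_lip (fun w => r w / L) 1 (K/L)
      zero_le_one (by positivity)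
      (fun u hu => by
        obtain ⟨hge, hle, -⟩ := hTfacts u hu
        have hru : 0 < r u := lt_of_lt_of_le hη hge
        rw [abs_of_nonneg (div_nonneg hru.le hL.le)]
        exact (div_le_one hL).2 hle)
      (fun u v hu hv => by
        rw [div_sub_div_same, abs_div, abs_of_pos hL, div_le_iff₀ hL]
        calc |r u - r v| ≤ K * ‖u - v‖ := hKlip u v hu hv
          _ = K / L * ‖u - v‖ * L := by field_simp)
      x y
  set C : ℝ := CF + CG with hCdef
  have hC : 0 < C := by positivity
  refine ⟨C, hC, F, ?_, ?_, ?_⟩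
  · -- image
    apply Subset.antisymm
    · rintro _ ⟨x, hxS, rfl⟩
      rcases eq_or_ne x 0 with rfl | hx
      · rw [hF0]; exact mem_closedBall_self hL.le
      · have hu := hunit x hx
        obtain ⟨hge, hle, -⟩ := hTfacts _ hu
        have hru : 0 < r (‖x‖⁻¹ • x) := lt_of_lt_of_le hη hge
        rw [mem_closedBall_zero_iff]
        have hnorm : ‖F x‖ = (L / r (‖x‖⁻¹ • x)) * ‖x‖ := by
          show ‖(L / r (‖x‖⁻¹ • x)) • x‖ = _
          rw [norm_smul, Real.norm_eq_abs, abs_of_nonneg (div_nonneg hL.le hru.le)]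
        rw [hnorm]
        calc (L / r (‖x‖⁻¹ • x)) * ‖x‖ ≤ (L / r (‖x‖⁻¹ • x)) * r (‖x‖⁻¹ • x) := by
              gcongr
              · exact hmemle x hxS hx
          _ = L := div_mul_cancel₀ L hru.ne'
    · intro z hz
      refine ⟨G z, ?_, hFG z⟩
      rcases eq_or_ne z 0 with rfl | hz0
      · rw [hG0]; exact h0S
      · have hu := hunit z hz0
        obtain ⟨hge, hle, hmem⟩ := hTfacts _ hu
        have hru : 0 < r (‖z‖⁻¹ • z) := lt_of_lt_of_le hη hge
        have hnz : ‖z‖ ≠ 0 := norm_ne_zero_iff.2 hz0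
        have hzL : ‖z‖ ≤ L := mem_closedBall_zero_iff.1 hz
        have hGz : G z = (‖z‖ / L) • ((r (‖z‖⁻¹ • z)) • (‖z‖⁻¹ • z)) := by
          show (r (‖z‖⁻¹ • z) / L) • z = _
          rw [smul_smul, smul_smul]
          congr 1
          field_simp
        rw [hGz]
        exact hstar _ hmem _ ⟨div_nonneg (norm_nonneg z) hL.le, (div_le_one hL).2 hzL⟩
  · -- injectivity
    intro x _ y _ hxy
    calc x = G (F x) := (hGF x).symm
      _ = G (F y) := by rw [hxy]
      _ = y := hGF y
  · intro x _ y _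
    constructor
    · have h1 : ‖x - y‖ ≤ CG * ‖F x - F y‖ := by
        calc ‖x - y‖ = ‖G (F x) - G (F y)‖ := by rw [hGF x, hGF y]
          _ ≤ CG * ‖F x - F y‖ := hGLip _ _
      have h2 : ‖x - y‖ ≤ C * ‖F x - F y‖ :=
        h1.trans (mul_le_mul_of_nonneg_right (by rw [hCdef]; linarith) (norm_nonneg _))
      rw [div_mul_eq_mul_div, one_mul, div_le_iff₀ hC]
      linarith [h2]
    · calc ‖F x - F y‖ ≤ CF * ‖x - y‖ := hFLip x y
        _ ≤ C * ‖x - y‖ :=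
          mul_le_mul_of_nonneg_right (by rw [hCdef]; linarith) (norm_nonneg _)
end

section
/- Let f : U → ℝ be smooth on an open subset U of a Riemannian manifold M given by f(x) = d_M²(c_i, x) − d_M²(c_j, x), with c_i ≠ c_j and with gradient (differential) at x equal to −2(exp_x⁻¹(c_i) − exp_x⁻¹(c_j)), where exp_x is a diffeomorphism on a neighborhood containing c_i and c_j. Then 0 is a regular value of f, and hence f⁻¹(0) (the geodesic bisector of c_i and c_j within U) is a codimension-1 submanifold of M; in particular it has d-dimensional Hausdorff measure zero for d = dim M. -/
open MeasureTheory Set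
open scoped NNReal ENNReal

/-- chart-level formulation: let `f(x) = d_M²(c_i,x) - d_M²(c_j,x)` on an
open set `U`, expressed in a chart on `ℝ^d`, with derivative
`df_x = ⟪-2(exp_x⁻¹(c_i) - exp_x⁻¹(c_j)), ·⟫`, where `e₁ x = exp_x⁻¹(c_i)` and
`e₂ x = exp_x⁻¹(c_j)` satisfy `e₁ x ≠ e₂ x` on `U` (by injectivity of `exp_x` and
`c_i ≠ c_j`).  Then `0` is a regular value of `f` (the differential is nonzero, hence
surjective, at every zero of `f` in `U`), and the geodesic bisector `f⁻¹(0) ∩ U` has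
`d`-dimensional (Lebesgue/Hausdorff) measure zero. -/
theorem geodesic_bisector_measure_zero {d : ℕ}
    (U : Set (EuclideanSpace ℝ (Fin d))) (hU : IsOpen U)
    (f : EuclideanSpace ℝ (Fin d) → ℝ)
    (e₁ e₂ : EuclideanSpace ℝ (Fin d) → EuclideanSpace ℝ (Fin d))
    (he₁ : ContinuousOn e₁ U) (he₂ : ContinuousOn e₂ U)
    (hdf : ∀ x ∈ U, HasFDerivAt f ((-2 : ℝ) • (innerSL ℝ (e₁ x - e₂ x))) x)
    (hneq : ∀ x ∈ U, e₁ x ≠ e₂ x) :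
    (∀ x ∈ U, f x = 0 → fderiv ℝ f x ≠ 0) ∧
      volume {x ∈ U | f x = 0} = 0 := by
  -- the derivative is nonzero wherever defined
  have key : ∀ x ∈ U, fderiv ℝ f x ≠ 0 := by
    intro x hx h0
    have hder := (hdf x hx).fderiv
    rw [h0] at hder
    have hv : e₁ x - e₂ x ≠ 0 := sub_ne_zero.2 (hneq x hx)
    have := congrArg (fun (L : (EuclideanSpace ℝ (Fin d)) →L[ℝ] ℝ) => L (e₁ x - e₂ x)) hder.symm
    simp only [ContinuousLinearMap.zero_apply, ContinuousLinearMap.smul_apply,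
      innerSL_apply_apply, smul_eq_mul] at this
    have hinner : inner ℝ (e₁ x - e₂ x) (e₁ x - e₂ x) = (0 : ℝ) := by linarith
    exact hv (inner_self_eq_zero.1 hinner)
  refine ⟨fun x hx _ => key x hx, ?_⟩
  -- `f` is `C¹` on `U`
  have hf1 : ContDiffOn ℝ 1 f U := by
    rw [(by norm_num : (1 : WithTop ℕ∞) = 0 + 1),
      contDiffOn_succ_iff_hasFDerivWithinAt_of_uniqueDiffOn hU.uniqueDiffOn]
    refine ⟨by simp, fun x => (-2 : ℝ) • (innerSL ℝ (e₁ x - e₂ x)), ?_, ?_⟩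
    · rw [contDiffOn_zero]
      exact (((innerSL ℝ).continuous.comp_continuousOn (he₁.sub he₂))).const_smul (-2:ℝ)
    · exact fun x hx => (hdf x hx).hasFDerivWithinAt
  -- measure zero via a local "flattening" map
  refine measure_null_of_locally_null _ fun x₀ hx₀ => ?_
  obtain ⟨hx₀U, hfx₀⟩ := hx₀
  set v : (EuclideanSpace ℝ (Fin d)) := e₁ x₀ - e₂ x₀ with hv_def
  have hv : v ≠ 0 := sub_ne_zero.2 (hneq x₀ hx₀U)
  have hvn : (‖v‖ : ℝ) ≠ 0 := norm_ne_zero_iff.2 hv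
  set w : (EuclideanSpace ℝ (Fin d)) := (‖v‖ ^ 2)⁻¹ • v with hw_def
  have hvw : inner ℝ v w = (1 : ℝ) := by
    rw [hw_def, real_inner_smul_right, real_inner_self_eq_norm_sq]
    field_simp
  -- the flattening map
  set F : (EuclideanSpace ℝ (Fin d)) → (EuclideanSpace ℝ (Fin d)) := fun x => x + ((-1/2 : ℝ) * f x - inner ℝ v x) • w with hF_def
  -- on the bisector, `F` lands in the hyperplane `ker ⟪v, ·⟫`
  have hFker : ∀ x, f x = 0 → F x ∈ LinearMap.ker ((innerSL ℝ v : EuclideanSpace ℝ (Fin d) →ₗ[ℝ] ℝ)) := by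
    intro x hfx
    simp only [LinearMap.mem_ker, ContinuousLinearMap.coe_coe, innerSL_apply_apply, hF_def]
    rw [inner_add_right, real_inner_smul_right, hvw, hfx]
    ring
  have hkerne : LinearMap.ker ((innerSL ℝ v : EuclideanSpace ℝ (Fin d) →ₗ[ℝ] ℝ)) ≠ ⊤ := by
    intro h
    have hvmem : v ∈ LinearMap.ker ((innerSL ℝ v : EuclideanSpace ℝ (Fin d) →ₗ[ℝ] ℝ)) := h ▸ Submodule.mem_top
    rw [LinearMap.mem_ker] at hvmem
    simp only [ContinuousLinearMap.coe_coe, innerSL_apply_apply] at hvmem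
    exact hv (inner_self_eq_zero.1 hvmem)
  -- `F` has derivative `id` at `x₀`
  have hzero : ((-1/2 : ℝ) • ((-2:ℝ) • innerSL ℝ v) - innerSL ℝ v) = 0 := by
    ext u
    simp only [ContinuousLinearMap.sub_apply, ContinuousLinearMap.smul_apply,
      innerSL_apply_apply, smul_eq_mul, ContinuousLinearMap.zero_apply]
    ring
  have h1 : HasFDerivAt (fun x : (EuclideanSpace ℝ (Fin d)) => (-1/2 : ℝ) * f x - inner ℝ v x)
      (0 : (EuclideanSpace ℝ (Fin d)) →L[ℝ] ℝ) x₀ := by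
    have := ((hdf x₀ hx₀U).const_mul (-1/2 : ℝ)).sub (innerSL ℝ v).hasFDerivAt
    rwa [hzero] at this
  have hF' : HasFDerivAt F (ContinuousLinearMap.id ℝ (EuclideanSpace ℝ (Fin d))) x₀ := by
    have h3 := (hasFDerivAt_id x₀).add (h1.smul_const w)
    have : (ContinuousLinearMap.id ℝ (EuclideanSpace ℝ (Fin d))) + ((0 : (EuclideanSpace ℝ (Fin d)) →L[ℝ] ℝ).smulRight w)
        = ContinuousLinearMap.id ℝ (EuclideanSpace ℝ (Fin d)) := by ext u; simp
    rwa [this] at h3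
  have hFid : HasStrictFDerivAt F (ContinuousLinearMap.id ℝ (EuclideanSpace ℝ (Fin d))) x₀ := by
    have hcd : ContDiffAt ℝ 1 F x₀ := by
      have hfca : ContDiffAt ℝ 1 f x₀ := hf1.contDiffAt (hU.mem_nhds hx₀U)
      have hinner : ContDiffAt ℝ 1 (fun x : (EuclideanSpace ℝ (Fin d)) => (inner ℝ v x : ℝ)) x₀ :=
        (innerSL ℝ v).contDiff.contDiffAt
      exact contDiffAt_id.add ((((contDiffAt_const.mul hfca).sub hinner).smul contDiffAt_const))
    have hstrict := hcd.hasStrictFDerivAt one_ne_zero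
    rwa [hF'.fderiv] at hstrict
  -- the volume estimate from approximate linearity
  have hdet : ((1/2 : ℝ≥0) : ℝ≥0∞) < ENNReal.ofReal |(ContinuousLinearMap.id ℝ (EuclideanSpace ℝ (Fin d))).det| := by
    have : (ContinuousLinearMap.id ℝ (EuclideanSpace ℝ (Fin d))).det = 1 := by
      simp [ContinuousLinearMap.det]
    rw [this]
    norm_num
  obtain ⟨δ, hδ, δpos⟩ :=
    ((MeasureTheory.mul_le_addHaar_image_of_lt_det volume (ContinuousLinearMap.id ℝ (EuclideanSpace ℝ (Fin d)))
      hdet).and self_mem_nhdsWithin).exists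
  obtain ⟨t, ht, hFt⟩ := hFid.approximates_deriv_on_nhds (Or.inr δpos)
  refine ⟨{x | x ∈ U ∧ f x = 0} ∩ t, Filter.inter_mem self_mem_nhdsWithin
    (mem_nhdsWithin_of_mem_nhds ht), ?_⟩
  have himg : volume (F '' ({x | x ∈ U ∧ f x = 0} ∩ t)) = 0 := by
    refine measure_mono_null ?_ (Measure.addHaar_submodule volume _ hkerne)
    rintro y ⟨x, ⟨⟨_, hfx⟩, _⟩, rfl⟩
    exact hFker x hfx
  have hle := hδ ({x | x ∈ U ∧ f x = 0} ∩ t) F (hFt.mono_set inter_subset_right)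
  rw [himg] at hle
  have h2 : ((1/2 : ℝ≥0) : ℝ≥0∞) * volume ({x | x ∈ U ∧ f x = 0} ∩ t) = 0 :=
    le_antisymm hle zero_le
  rcases mul_eq_zero.1 h2 with h | h
  · norm_num at h
  · exact h
end
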